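/- In the setting of the candidate-selection mechanism with d-critical monotone valuations on a matroid M: if a bidder i ∉ I* is a candidate (i.e., i ∈ I_i, the greedy set under weights w_i(i)=v_i(s), w_i(j)=v_j(s_{-i},0_i) for j≠i), then there exists j ∈ I* with v_j(s_{-i}, 0_i) < v_j(s). Consequently |𝒞| ≤ (d+1) · |I*|, where 𝒞 is the set of candidates. -/

import Mathlib

open Finset
open scoped Classical

variable {n : ℕ}

/-- The list of indices sorted in nonincreasing order of weight,
breaking ties in favor of lower indices. -/
noncomputable def sortedList (n : ℕ) (w : Fin n → ℝ) : List (Fin n) :=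
  (List.finRange n).mergeSort (fun a b => decide (w b < w a ∨ (w a = w b ∧ a ≤ b)))

/-- Greedy: process the list in order, adding an element whenever independence is kept. -/
noncomputable def greedyAux (Indep : Finset (Fin n) → Prop) :
    List (Fin n) → Finset (Fin n) → Finset (Fin n)
  | [], I => I
  | a :: l, I => greedyAux Indep l (if Indep (insert a I) then insert a I else I)

/-- The greedy algorithm on a matroid with weights `w`. -/
noncomputable def greedy (Indep : Finset (Fin n) → Prop) (w : Fin n → ℝ) : Finset (Fin n) :=
  greedyAux Indep (sortedList n w) ∅

/-- The matroid rank function. -/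
noncomputable def rank (Indep : Finset (Fin n) → Prop) (S : Finset (Fin n)) : ℕ :=
  (S.powerset.filter Indep).sup Finset.card

/-- The weight function used to decide whether bidder `i` is a candidate. -/
noncomputable def wfun {n : ℕ} (v : Fin n → (Fin n → NNReal) → ℝ)
    (s : Fin n → NNReal) (i : Fin n) : Fin n → ℝ :=
  fun j => if j = i then v i s else v j (Function.update s i 0)

/-
The greedy algorithm selects `x` exactly when `x` is not spanned by the elements it selected
before `x`. Suppose the candidate `i ∉ I*` had `v j (s_{-i}, 0_i) = v j s` for every `j ∈ I*`
(monotonicity excludes `>`). Then the weights `w_i` agree with the true weights on `I* ∪ {i}`,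
so every element of `I*` preceding `i` still precedes `i` under `w_i`, and is therefore spanned
by the elements the `w_i`-greedy run selects before `i`. Since `i` is spanned by the elements of
`I*` preceding it, `i` is spanned by those as well and is rejected: `i` is not a candidate.
By `d`-criticality each `j ∈ I*` can serve as such a witness for at most `d` candidates.
-/

/-- The order in which `sortedList n w` lists the indices. -/
def priority (w : Fin n → ℝ) (a : Fin n) : Lex (ℝᵒᵈ × Fin n) :=
  toLex (OrderDual.toDual (w a), a)

lemma priority_injective (w : Fin n → ℝ) : Function.Injective (priority w) :=
  fun _ _ h => congrArg Prod.snd (toLex.injective h)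

lemma priority_le_priority_iff (w : Fin n → ℝ) {a b : Fin n} :
    priority w a ≤ priority w b ↔ w b < w a ∨ (w a = w b ∧ a ≤ b) := by
  simp only [priority, Prod.Lex.toLex_le_toLex, OrderDual.toDual_lt_toDual,
    OrderDual.toDual_inj]

lemma mem_sortedList (w : Fin n → ℝ) (x : Fin n) : x ∈ sortedList n w :=
  (List.mergeSort_perm _ _).mem_iff.2 (List.mem_finRange x)

lemma pairwise_priority_lt_sortedList (w : Fin n → ℝ) :
    (sortedList n w).Pairwise (fun a b => priority w a < priority w b) := by
  have hle : (sortedList n w).Pairwise (fun a b => priority w a ≤ priority w b) := by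
    refine (List.pairwise_mergeSort ?_ ?_ _).imp ?_
    · simp only [decide_eq_true_eq, ← priority_le_priority_iff]
      exact fun _ _ _ => le_trans
    · simp only [Bool.or_eq_true, decide_eq_true_eq, ← priority_le_priority_iff]
      exact fun a b => le_total _ _
    · simp only [decide_eq_true_eq, ← priority_le_priority_iff, imp_self, implies_true]
  have hnodup : (sortedList n w).Nodup :=
    (List.mergeSort_perm _ _).nodup_iff.2 (List.nodup_finRange n)
  exact (hle.and hnodup).imp fun h => h.1.lt_of_ne ((priority_injective w).ne h.2)

lemma exists_matroid_indep_iff {α : Type*} [DecidableEq α] (Indep : Finset α → Prop)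
    (hEmpty : Indep ∅)
    (hDown : ∀ A B : Finset α, A ⊆ B → Indep B → Indep A)
    (hExch : ∀ A B : Finset α, Indep A → Indep B → A.card < B.card →
      ∃ x ∈ B, x ∉ A ∧ Indep (insert x A)) :
    ∃ M : Matroid α, M.E = Set.univ ∧ ∀ I : Finset α, M.Indep I ↔ Indep I :=
  ⟨(IndepMatroid.ofFinset Set.univ Indep hEmpty (fun _ _ hB hAB => hDown _ _ hAB hB)
    hExch (fun _ _ => Set.subset_univ _)).matroid, rfl, fun _ => by simp⟩

lemma subset_greedyAux {Indep : Finset (Fin n) → Prop} :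
    ∀ (l : List (Fin n)) (I : Finset (Fin n)), I ⊆ greedyAux Indep l I
  | [], _ => subset_rfl
  | a :: l, I => by
      refine subset_trans ?_ (subset_greedyAux l _)
      split_ifs
      exacts [subset_insert _ _, subset_rfl]

namespace Matroid

variable (M : Matroid (Fin n))

lemma indep_greedyAux :
    ∀ (l : List (Fin n)) (I : Finset (Fin n)), M.Indep I →
      M.Indep (greedyAux (fun I => M.Indep I) l I)
  | [], _, hI => hI
  | a :: l, I, hI => by
      refine indep_greedyAux l _ ?_
      split_ifs with h
      exacts [h, hI]

lemma mem_closure_greedyAux {β : Type*} [LinearOrder β] (f : Fin n → β) {x : Fin n}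
    (hx : x ∈ M.E) :
    ∀ (l : List (Fin n)) (I : Finset (Fin n)), M.Indep I → l.Pairwise (fun a b => f a < f b) →
      x ∈ l → x ∉ greedyAux (fun I => M.Indep I) l I →
      x ∈ M.closure
        (↑I ∪ {y ∈ (greedyAux (fun I => M.Indep I) l I : Set (Fin n)) | f y < f x})
  | [], _, _, _, hxl, _ => absurd hxl List.not_mem_nil
  | a :: l, I, hI, hl, hxl, hxG => by
      simp only [greedyAux] at hxG ⊢
      set I' := if M.Indep ↑(insert a I) then insert a I else I
      have hI' : M.Indep I' := by unfold I'; split_ifs with h; exacts [h, hI]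
      rcases List.mem_cons.1 hxl with rfl | hxl
      · have hxI' : x ∉ I' := fun h => hxG (subset_greedyAux l I' h)
        have hxI : x ∉ I := fun h => hxI' (by unfold I'; split_ifs <;> simp [h])
        have hdep : ¬ M.Indep ↑(insert x I) := fun h =>
          hxI' (by simp only [I', if_pos h, mem_insert_self])
        refine M.closure_subset_closure Set.subset_union_left ?_
        rw [hI.mem_closure_iff_of_notMem (by exact_mod_cast hxI), Dep, ← coe_insert]
        exact ⟨hdep, coe_insert x I ▸ Set.insert_subset hx hI.subset_ground⟩
      · refine M.closure_subset_closure ?_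
          (mem_closure_greedyAux f hx l I' hI' (List.pairwise_cons.1 hl).2 hxl hxG)
        refine Set.union_subset ?_ Set.subset_union_right
        unfold I'
        split_ifs
        · rw [coe_insert]
          refine Set.insert_subset (Or.inr ⟨?_, (List.pairwise_cons.1 hl).1 x hxl⟩)
            Set.subset_union_left
          exact subset_greedyAux l _ (mem_insert_self a I)
        · exact Set.subset_union_left

variable (w : Fin n → ℝ)

def greedyPrefix (x : Fin n) : Set (Fin n) :=
  {y ∈ (greedy (fun I => M.Indep I) w : Set (Fin n)) | priority w y < priority w x}

lemma greedyPrefix_subset (x : Fin n) :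
    M.greedyPrefix w x ⊆ greedy (fun I => M.Indep I) w :=
  Set.sep_subset _ _

lemma indep_greedy : M.Indep (greedy (fun I => M.Indep I) w) :=
  M.indep_greedyAux _ _ (by simp)

lemma mem_closure_greedyPrefix_iff {x : Fin n} (hx : x ∈ M.E) :
    x ∈ M.closure (M.greedyPrefix w x) ↔ x ∉ greedy (fun I => M.Indep I) w := by
  constructor
  · intro hcl hxG
    have hP := (M.indep_greedy w).subset (M.greedyPrefix_subset w x)
    refine (hP.notMem_closure_iff hx).2 ⟨?_, fun h => lt_irrefl _ h.2⟩ hcl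
    exact (M.indep_greedy w).subset (Set.insert_subset hxG (M.greedyPrefix_subset w x))
  · intro hxG
    simpa [greedyPrefix, greedy] using
      M.mem_closure_greedyAux (priority w) hx (sortedList n w) ∅ (by simp)
        (pairwise_priority_lt_sortedList w) (mem_sortedList w x) hxG

lemma mem_closure_greedyPrefix_of_priority_lt {x y : Fin n} (hx : x ∈ M.E)
    (hxy : priority w x < priority w y) : x ∈ M.closure (M.greedyPrefix w y) := by
  by_cases hxG : x ∈ greedy (fun I => M.Indep I) w
  · exact M.subset_closure _ ((M.greedyPrefix_subset w y).trans (M.indep_greedy w).subset_ground)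
      ⟨hxG, hxy⟩
  · refine M.closure_subset_closure ?_ ((M.mem_closure_greedyPrefix_iff w hx).2 hxG)
    exact fun z hz => ⟨hz.1, hz.2.trans hxy⟩

theorem notMem_greedy_of_eqOn {w' : Fin n → ℝ} {i : Fin n} (hiE : i ∈ M.E)
    (hi : i ∉ greedy (fun I => M.Indep I) w)
    (hw : Set.EqOn w' w (insert i (greedy (fun I => M.Indep I) w))) :
    i ∉ greedy (fun I => M.Indep I) w' := by
  have hpriority : ∀ a ∈ greedy (fun I => M.Indep I) w, priority w a < priority w i →
      priority w' a < priority w' i := by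
    intro a ha hlt
    simpa only [priority, hw (Set.mem_insert i _), hw (Set.mem_insert_of_mem i ha)] using hlt
  have hspan : M.greedyPrefix w i ⊆ M.closure (M.greedyPrefix w' i) := fun a ha =>
    M.mem_closure_greedyPrefix_of_priority_lt w' ((M.indep_greedy w).subset_ground ha.1)
      (hpriority a ha.1 ha.2)
  rw [← M.mem_closure_greedyPrefix_iff w' hiE]
  exact M.closure_subset_closure_of_subset_closure hspan
    ((M.mem_closure_greedyPrefix_iff w hiE).2 hi)

end Matroid

lemma card_le_mul_of_subset_union_biUnion {α : Type*} [DecidableEq α] {C I : Finset α}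
    {D : α → Finset α} {d : ℕ} (hC : C ⊆ I ∪ I.biUnion D)
    (hD : ∀ j ∈ I, (D j).card ≤ d) :
    C.card ≤ (d + 1) * I.card :=
  calc C.card ≤ (I ∪ I.biUnion D).card := card_le_card hC
    _ ≤ I.card + (I.biUnion D).card := card_union_le _ _
    _ ≤ I.card + I.card * d := by gcongr; exact card_biUnion_le_card_mul _ _ _ hD
    _ = (d + 1) * I.card := by ring

theorem stmt_15_general {n : ℕ} (Indep : Finset (Fin n) → Prop)
    (hEmpty : Indep ∅)
    (hDown : ∀ A B : Finset (Fin n), A ⊆ B → Indep B → Indep A)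
    (hExch : ∀ A B : Finset (Fin n), Indep A → Indep B → A.card < B.card →
      ∃ x ∈ B, x ∉ A ∧ Indep (insert x A))
    (d : ℕ) (v : Fin n → (Fin n → NNReal) → ℝ)
    (hmono : ∀ i, Monotone (v i))
    (hcrit : ∀ (j : Fin n) (t : Fin n → NNReal),
      (Finset.univ.filter fun k => v j (Function.update t k 0) < v j t).card ≤ d)
    (s : Fin n → NNReal)
    (Istar C : Finset (Fin n))
    (hIstar : Istar = greedy Indep (fun j => v j s))
    (hC : C = Finset.univ.filter fun i => i ∈ greedy Indep (wfun v s i)) :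
    (∀ i : Fin n, i ∉ Istar → i ∈ greedy Indep (wfun v s i) →
        ∃ j ∈ Istar, v j (Function.update s i 0) < v j s) ∧
    C.card ≤ (d + 1) * Istar.card := by
  obtain ⟨M, hE, hM⟩ := exists_matroid_indep_iff Indep hEmpty hDown hExch
  obtain rfl : Indep = fun I : Finset (Fin n) => M.Indep I := funext fun I => propext (hM I).symm
  have hwitness : ∀ i : Fin n, i ∉ Istar → i ∈ greedy (fun I => M.Indep I) (wfun v s i) →
      ∃ j ∈ Istar, v j (Function.update s i 0) < v j s := by
    intro i hi hcand
    by_contra! hnone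
    rw [hIstar] at hi hnone
    refine M.notMem_greedy_of_eqOn (fun j => v j s) (hE ▸ Set.mem_univ i) hi ?_ hcand
    rintro j (rfl | hj)
    · simp [wfun]
    · simp only [wfun, if_neg (ne_of_mem_of_not_mem hj hi)]
      exact (hmono j (update_le_self_iff.2 zero_le)).antisymm (hnone j hj)
  refine ⟨hwitness, card_le_mul_of_subset_union_biUnion ?_ fun j _ => hcrit j s⟩
  intro i hi
  rw [hC, mem_filter] at hi
  by_cases hiI : i ∈ Istar
  · exact mem_union_left _ hiI
  · obtain ⟨j, hj, hlt⟩ := hwitness i hiI hi.2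
    exact mem_union_right _ (mem_biUnion.2 ⟨j, hj, mem_filter.2 ⟨mem_univ i, hlt⟩⟩)

/-- If a bidder `i ∉ I*` is a candidate then some `j ∈ I*` has `v j (s_{-i},0_i) < v j s`;
consequently, for `d`-critical valuations, `|𝒞| ≤ (d+1)·|I*|`. -/
theorem stmt_15 {n : ℕ} (Indep : Finset (Fin n) → Prop)
    (hEmpty : Indep ∅)
    (hDown : ∀ A B : Finset (Fin n), A ⊆ B → Indep B → Indep A)
    (hExch : ∀ A B : Finset (Fin n), Indep A → Indep B → A.card < B.card →
      ∃ x ∈ B, x ∉ A ∧ Indep (insert x A))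
    (d : ℕ) (v : Fin n → (Fin n → NNReal) → ℝ)
    (hmono : ∀ i, Monotone (v i))
    (hnonneg : ∀ i t, 0 ≤ v i t)
    (hcrit : ∀ (j : Fin n) (t : Fin n → NNReal),
      (Finset.univ.filter fun k => v j (Function.update t k 0) < v j t).card ≤ d)
    (s : Fin n → NNReal)
    (Istar C : Finset (Fin n))
    (hIstar : Istar = greedy Indep (fun j => v j s))
    (hC : C = Finset.univ.filter fun i => i ∈ greedy Indep (wfun v s i)) :
    (∀ i : Fin n, i ∉ Istar → i ∈ greedy Indep (wfun v s i) →
        ∃ j ∈ Istar, v j (Function.update s i 0) < v j s) ∧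
    C.card ≤ (d + 1) * Istar.card :=
  stmt_15_general Indep hEmpty hDown hExch d v hmono hcrit s Istar C hIstar hC
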